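/- Fix a real α > 0, an integer d ≥ 1, and an integer t ≥ 0. Define S_d(t) = Σ_{k=1}^d k^{−α}(1 − k^{−α})^t and I_d(t) = ∫_1^d k^{−α}(1 − k^{−α})^t dk. Then |S_d(t) − I_d(t)| ≤ δ_d(t), where δ_d(t) = (1/(1+t))·(1 − 1/(1+t))^t if 1 + t ≤ d^α, and δ_d(t) = d^{−α}·(1 − d^{−α})^t if 1 + t ≥ d^α. -/

import Mathlib

/-!
The integrand is `g (x ^ (-α))` with `g u = u * (1 - u) ^ t`. Since `g` increases up to
`u = 1 / (1 + t)` and decreases after it, while `x ↦ x ^ (-α)` decreases, the integrand increases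
on `[1, (1 + t) ^ (1 / α)]` and decreases afterwards. For a nonnegative function of this shape the
rectangle rule on `[1, d]` errs by at most the maximum of the function on `[1, d]`: this is
`g (1 / (1 + t))` when the peak lies in `[1, d]` and the value at `d` otherwise.
-/

open Set MeasureTheory intervalIntegral

section SumIntegralComparison

variable {f : ℝ → ℝ} {a b : ℕ}

theorem MonotoneOn.sum_Icc_sub_integral_mem_Icc (hab : a ≤ b) (hf : MonotoneOn f (Icc a b)) :
    ∑ k ∈ Finset.Icc a b, f k - ∫ x in a..b, f x ∈ Icc (f a) (f b) := by
  have lower := hf.integral_le_sum_Ico hab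
  have upper := hf.sum_le_integral_Ico hab
  rw [Finset.sum_Ico_add' (fun i : ℕ ↦ f i), Finset.Ico_add_one_add_one_eq_Ioc] at lower
  constructor
  · rw [← Finset.add_sum_Ioc_eq_sum_Icc hab]; linarith
  · rw [← Finset.sum_Ico_add_eq_sum_Icc hab]; linarith

theorem AntitoneOn.sum_Icc_sub_integral_mem_Icc (hab : a ≤ b) (hf : AntitoneOn f (Icc a b)) :
    ∑ k ∈ Finset.Icc a b, f k - ∫ x in a..b, f x ∈ Icc (f b) (f a) := by
  obtain ⟨lower, upper⟩ := hf.neg.sum_Icc_sub_integral_mem_Icc hab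
  simp only [Finset.sum_neg_distrib, intervalIntegral.integral_neg] at lower upper
  constructor <;> linarith

theorem intervalIntegrable_of_monotoneOn_of_antitoneOn {x c y : ℝ} (hxc : x ≤ c) (hcy : c ≤ y)
    (hmono : MonotoneOn f (Icc x c)) (hanti : AntitoneOn f (Icc c y)) :
    IntervalIntegrable f volume x y :=
  (MonotoneOn.intervalIntegrable (by rwa [uIcc_of_le hxc])).trans
    (AntitoneOn.intervalIntegrable (by rwa [uIcc_of_le hcy]))

theorem min_le_integral_of_monotoneOn_of_antitoneOn {x c : ℝ} (hxc : x ≤ c) (hcx : c ≤ x + 1)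
    (hmono : MonotoneOn f (Icc x c)) (hanti : AntitoneOn f (Icc c (x + 1))) :
    min (f x) (f (x + 1)) ≤ ∫ y in x..x + 1, f y := by
  have h := integral_mono_on (by linarith) (intervalIntegrable_const (c := min (f x) (f (x + 1))))
    (intervalIntegrable_of_monotoneOn_of_antitoneOn hxc hcx hmono hanti) fun y hy ↦ by
      rcases le_total y c with hyc | hcy
      · exact (min_le_left _ _).trans (hmono ⟨le_rfl, hxc⟩ ⟨hy.1, hyc⟩ hy.1)
      · exact (min_le_right _ _).trans (hanti ⟨hcy, hy.2⟩ ⟨hcx, le_rfl⟩ hy.2)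
  simpa using h

theorem sum_Icc_sub_integral_eq_of_lt {m : ℕ} (ham : a ≤ m) (hmb : m < b)
    (hleft : IntervalIntegrable f volume a m) (hmid : IntervalIntegrable f volume m (m + 1))
    (hright : IntervalIntegrable f volume (m + 1) b) :
    ∑ k ∈ Finset.Icc a b, f k - ∫ x in a..b, f x =
      (∑ k ∈ Finset.Icc a m, f k - ∫ x in a..m, f x) +
        (∑ k ∈ Finset.Icc (m + 1) b, f k - ∫ x in (m + 1 : ℝ)..b, f x) -
          ∫ x in (m : ℝ)..m + 1, f x := by
  have hsum : ∑ k ∈ Finset.Icc a b, f k =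
      ∑ k ∈ Finset.Icc a m, f k + ∑ k ∈ Finset.Icc (m + 1) b, f k := by
    simp only [← Finset.Ico_add_one_right_eq_Icc]
    exact (Finset.sum_Ico_consecutive _ (by omega) (by omega)).symm
  rw [hsum, ← integral_add_adjacent_intervals (hleft.trans hmid) hright,
    ← integral_add_adjacent_intervals hleft hmid]
  ring

/-- Splitting `[a, b]` at `m = ⌊c⌋` and `m + 1`, the two monotone pieces contribute errors in
`[f a, f m]` and `[f b, f (m + 1)]`, and the integral over `[m, m + 1]` lies between
`min (f m) (f (m + 1))` and `M`. -/
theorem abs_sum_Icc_sub_integral_le_of_monotoneOn_of_antitoneOn {c M : ℝ} (hab : a ≤ b)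
    (hac : a ≤ c) (hmono : MonotoneOn f (Icc a c)) (hanti : AntitoneOn f (Icc c b))
    (hfM : MapsTo f (Icc a b) (Icc 0 M)) :
    |∑ k ∈ Finset.Icc a b, f k - ∫ x in a..b, f x| ≤ M := by
  have hfM' : ∀ k : ℕ, a ≤ k → k ≤ b → f k ∈ Icc 0 M := fun k hak hkb ↦
    hfM ⟨by exact_mod_cast hak, by exact_mod_cast hkb⟩
  obtain ⟨hfa, -⟩ := hfM' a le_rfl hab
  obtain ⟨hfb, hfbM⟩ := hfM' b hab le_rfl
  rw [abs_le]
  rcases le_or_gt (b : ℝ) c with hbc | hcb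
  · obtain ⟨lower, upper⟩ :=
      (hmono.mono (Icc_subset_Icc_right hbc)).sum_Icc_sub_integral_mem_Icc hab
    constructor <;> linarith
  set m := ⌊c⌋₊
  have hmc : (m : ℝ) ≤ c := Nat.floor_le ((Nat.cast_nonneg a).trans hac)
  have hcm : c < m + 1 := Nat.lt_floor_add_one c
  have ham : a ≤ m := Nat.le_floor hac
  have hmb : m < b := by exact_mod_cast hmc.trans_lt hcb
  have ham' : (a : ℝ) ≤ m := by exact_mod_cast ham
  have hmb' : (m : ℝ) + 1 ≤ b := by exact_mod_cast hmb
  have hmono' : MonotoneOn f (Icc a m) := hmono.mono (Icc_subset_Icc_right hmc)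
  have hanti' : AntitoneOn f (Icc (m + 1 : ℕ) b) := by
    push_cast; exact hanti.mono (Icc_subset_Icc_left hcm.le)
  have hmono_mid := hmono.mono (Icc_subset_Icc_left ham')
  have hanti_mid := hanti.mono (Icc_subset_Icc_right hmb')
  have hmid_int := intervalIntegrable_of_monotoneOn_of_antitoneOn hmc hcm.le hmono_mid hanti_mid
  have hmid_ge := min_le_integral_of_monotoneOn_of_antitoneOn hmc hcm.le hmono_mid hanti_mid
  have hmid_le : ∫ x in (m : ℝ)..m + 1, f x ≤ M := by
    have h := integral_mono_on (by linarith) hmid_int intervalIntegrable_const fun x hx ↦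
      (hfM ⟨by linarith [hx.1], by linarith [hx.2]⟩).2
    simpa using h
  have hfm := (hfM' m ham hmb.le).2
  have hfm1 := (hfM' (m + 1) (by omega) hmb).2
  push_cast at hfm1
  obtain ⟨l1, u1⟩ := hmono'.sum_Icc_sub_integral_mem_Icc ham
  obtain ⟨l2, u2⟩ := hanti'.sum_Icc_sub_integral_mem_Icc (show m + 1 ≤ b from hmb)
  rw [Nat.cast_add_one] at l2 u2
  rw [sum_Icc_sub_integral_eq_of_lt ham hmb
    (MonotoneOn.intervalIntegrable (by rwa [uIcc_of_le ham'])) hmid_int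
    (AntitoneOn.intervalIntegrable (by rw [uIcc_of_le hmb']; exact_mod_cast hanti'))]
  constructor
  · linarith
  · linarith [min_add_max (f m) (f (m + 1)), max_le hfm hfm1]

end SumIntegralComparison

section UnimodalPower

variable (t : ℕ)

theorem hasDerivAt_mul_one_sub_pow (u : ℝ) :
    HasDerivAt (fun u : ℝ ↦ u * (1 - u) ^ t) ((1 - u) ^ t - t * u * (1 - u) ^ (t - 1)) u :=
  ((hasDerivAt_id' u).fun_mul (((hasDerivAt_id' u).const_sub 1).fun_pow t)).congr_deriv (by ring)

theorem one_sub_mul_deriv_mul_one_sub_pow (u : ℝ) :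
    (1 - u) * ((1 - u) ^ t - t * u * (1 - u) ^ (t - 1)) = (1 - u) ^ t * (1 - (1 + t) * u) := by
  cases t with
  | zero => simp
  | succ s => simp only [Nat.add_sub_cancel, pow_succ]; push_cast; ring

theorem monotoneOn_mul_one_sub_pow :
    MonotoneOn (fun u : ℝ ↦ u * (1 - u) ^ t) (Iic (1 + t : ℝ)⁻¹) := by
  have hp : (1 + t : ℝ)⁻¹ ≤ 1 := inv_le_one_of_one_le₀ (by simp)
  refine monotoneOn_of_hasDerivWithinAt_nonneg (convex_Iic _) (by fun_prop)
    (fun u _ ↦ (hasDerivAt_mul_one_sub_pow t u).hasDerivWithinAt) fun u hu ↦ ?_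
  rw [interior_Iic, mem_Iio] at hu
  have hu1 : u < 1 := hu.trans_le hp
  rw [inv_eq_one_div, lt_div_iff₀ (by positivity)] at hu
  refine nonneg_of_mul_nonneg_right ?_ (by linarith : 0 < 1 - u)
  rw [one_sub_mul_deriv_mul_one_sub_pow]
  exact mul_nonneg (pow_nonneg (by linarith) t) (by linarith)

theorem antitoneOn_mul_one_sub_pow :
    AntitoneOn (fun u : ℝ ↦ u * (1 - u) ^ t) (Icc (1 + t : ℝ)⁻¹ 1) := by
  refine antitoneOn_of_hasDerivWithinAt_nonpos (convex_Icc _ _) (by fun_prop)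
    (fun u _ ↦ (hasDerivAt_mul_one_sub_pow t u).hasDerivWithinAt) fun u hu ↦ ?_
  rw [interior_Icc, mem_Ioo, inv_eq_one_div, div_lt_iff₀ (by positivity)] at hu
  refine nonpos_of_mul_nonpos_right ?_ (by linarith : 0 < 1 - u)
  rw [one_sub_mul_deriv_mul_one_sub_pow]
  exact mul_nonpos_of_nonneg_of_nonpos (pow_nonneg (by linarith) t) (by linarith)

theorem mul_one_sub_pow_le {u : ℝ} (hu : u ≤ 1) :
    u * (1 - u) ^ t ≤ (1 + t : ℝ)⁻¹ * (1 - (1 + t : ℝ)⁻¹) ^ t := by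
  have hp : (1 + t : ℝ)⁻¹ ≤ 1 := inv_le_one_of_one_le₀ (by simp)
  rcases le_total u (1 + t : ℝ)⁻¹ with hup | hpu
  · exact monotoneOn_mul_one_sub_pow t hup (mem_Iic.2 le_rfl) hup
  · exact antitoneOn_mul_one_sub_pow t ⟨le_rfl, hp⟩ ⟨hpu, hu⟩ hpu

end UnimodalPower

section Integrand

variable {α : ℝ} (t : ℕ)

theorem rpow_inv_rpow_neg (hα : α ≠ 0) {s : ℝ} (hs : 0 ≤ s) : (s ^ α⁻¹) ^ (-α) = s⁻¹ := by
  rw [Real.rpow_neg (Real.rpow_nonneg hs _), Real.rpow_inv_rpow hs hα]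

theorem monotoneOn_rpow_neg_mul_one_sub_pow (hα : 0 < α) :
    MonotoneOn (fun x : ℝ ↦ x ^ (-α) * (1 - x ^ (-α)) ^ t) (Icc 1 ((1 + t) ^ α⁻¹)) := by
  refine (antitoneOn_mul_one_sub_pow t).comp
    ((Real.antitoneOn_rpow_Ioi_of_exponent_nonpos (by linarith)).mono
      fun x hx ↦ zero_lt_one.trans_le hx.1) fun x hx ↦ ⟨?_, ?_⟩
  · rw [← rpow_inv_rpow_neg hα.ne' (by positivity : (0 : ℝ) ≤ 1 + t)]
    exact Real.rpow_le_rpow_of_nonpos (by linarith [hx.1]) hx.2 (by linarith)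
  · exact Real.rpow_le_one_of_one_le_of_nonpos hx.1 (by linarith)

theorem antitoneOn_rpow_neg_mul_one_sub_pow (hα : 0 < α) :
    AntitoneOn (fun x : ℝ ↦ x ^ (-α) * (1 - x ^ (-α)) ^ t) (Ici ((1 + t) ^ α⁻¹)) := by
  have hc : (0 : ℝ) < (1 + t) ^ α⁻¹ := Real.rpow_pos_of_pos (by positivity) _
  refine (monotoneOn_mul_one_sub_pow t).comp_AntitoneOn
    ((Real.antitoneOn_rpow_Ioi_of_exponent_nonpos (by linarith)).mono
      fun x hx ↦ hc.trans_le hx) fun x hx ↦ ?_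
  rw [mem_Iic, ← rpow_inv_rpow_neg hα.ne' (by positivity : (0 : ℝ) ≤ 1 + t)]
  exact Real.rpow_le_rpow_of_nonpos hc hx (by linarith)

/-- In the second case the peak `(1 + t) ^ α⁻¹` lies beyond `d`, so the function increases on
`[1, d]`. -/
theorem rpow_neg_mul_one_sub_pow_mem_Icc (hα : 0 < α) {x d : ℝ} (hx : 1 ≤ x) (hxd : x ≤ d) :
    x ^ (-α) * (1 - x ^ (-α)) ^ t ∈ Icc 0
      (if 1 + (t : ℝ) ≤ d ^ α then (1 + (t : ℝ))⁻¹ * (1 - (1 + (t : ℝ))⁻¹) ^ t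
        else d ^ (-α) * (1 - d ^ (-α)) ^ t) := by
  have hu1 : x ^ (-α) ≤ 1 := Real.rpow_le_one_of_one_le_of_nonpos hx (by linarith)
  refine ⟨mul_nonneg (Real.rpow_nonneg (by linarith) _) (pow_nonneg (by linarith) t), ?_⟩
  split_ifs with h
  · exact mul_one_sub_pow_le t hu1
  · have hdc : d ≤ (1 + t) ^ α⁻¹ :=
      ((Real.lt_rpow_inv_iff_of_pos (by linarith) (by positivity) hα).2 (not_le.1 h)).le
    exact monotoneOn_rpow_neg_mul_one_sub_pow t hα ⟨hx, hxd.trans hdc⟩ ⟨hx.trans hxd, hdc⟩ hxd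

end Integrand

theorem stmt3 (α : ℝ) (hα : 0 < α) (d : ℕ) (hd : 1 ≤ d) (t : ℕ) :
    |(∑ k ∈ Finset.Icc 1 d, (k : ℝ) ^ (-α) * (1 - (k : ℝ) ^ (-α)) ^ (t : ℝ)) -
      ∫ k in (1 : ℝ)..(d : ℝ), k ^ (-α) * (1 - k ^ (-α)) ^ (t : ℝ)| ≤
    (if 1 + (t : ℝ) ≤ (d : ℝ) ^ α
      then (1 / (1 + (t : ℝ))) * (1 - 1 / (1 + (t : ℝ))) ^ (t : ℝ)
      else (d : ℝ) ^ (-α) * (1 - (d : ℝ) ^ (-α)) ^ (t : ℝ)) := by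
  simp only [Real.rpow_natCast, one_div]
  have hc : 1 ≤ (1 + t : ℝ) ^ α⁻¹ := Real.one_le_rpow (by simp) (inv_nonneg.2 hα.le)
  have key := abs_sum_Icc_sub_integral_le_of_monotoneOn_of_antitoneOn hd
    (by rw [Nat.cast_one]; exact hc)
    (by rw [Nat.cast_one]; exact monotoneOn_rpow_neg_mul_one_sub_pow t hα)
    ((antitoneOn_rpow_neg_mul_one_sub_pow t hα).mono Icc_subset_Ici_self)
    fun x hx ↦ rpow_neg_mul_one_sub_pow_mem_Icc t hα (Nat.cast_one.symm.trans_le hx.1) hx.2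
  rwa [Nat.cast_one] at key
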